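/- arXiv:1305.1265 — 4 statements merged into one kernel-verified Lean document; each statement's English description precedes it below -/
import Mathlib

section
/- Let d ≥ 3 be an integer, set g = 2(d−1) and k = d−1, and let c > 0 be a rational number. Define rational numbers f_0 = d(d−1), f_1 = (2d−3)(3d−2), f_2 = 3(d−2)(4d−3), and for every integer i with 3 ≤ i ≤ d−1 set f_i = −i(i−2)·f_1 + (i(i−1)/2)·f_2 + γ_i/c. Define b_0 = g and b_i = 4i(g−i) for 1 ≤ i ≤ d−1. Then for every integer i with 0 ≤ i ≤ d−1 one has (6d² + d − 6)·b_i < (8g + 4)·f_i. -/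
/-!
For `i = 0` the inequality is `2(d-1)(2d-3)(d-2) > 0`. For `1 ≤ i ≤ d-1` the numbers `f_1`, `f_2`
also obey the quadratic formula for `f_i` (with zero `γ`-term), and the difference of the two
sides is `4i` times a cubic in `d, i` whose coefficients are nonnegative in `i - 1` and `d - 1 - i`,
plus `(8g+4)·γ_i/c`. So it only remains to see `γ_i ≥ 0`: each summand of `γ_i` is at most
`2(i-3)` times its leading factor `(2k-2)!/(k!(k-1)!)`, by the single-term Vandermonde bound
`C(l+m, l)² ≤ C(2l+2m, 2l)`, and there are at most `(i-2)/2` summands.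
-/

open Finset

/-- The coefficient `γ_i` (for `k ≥ 2`, `i ≥ 3`) from the Eisenbud–Harris
formula for the Petri divisor. -/
def gammaEH (k i : ℕ) : ℚ :=
  ((i : ℚ) - 1) * ((i : ℚ) - 2) * (Nat.factorial (2 * k - 2)) /
      ((Nat.factorial k) * (Nat.factorial (k - 1)))
    - ∑ l ∈ Finset.Icc 1 ((i - 2) / 2),
        2 * ((i : ℚ) - 1 - 2 * (l : ℚ)) * (Nat.factorial (2 * l)) *
            (Nat.factorial (2 * k - 2 - 2 * l)) /
          ((Nat.factorial (l + 1)) * (Nat.factorial l) * (Nat.factorial (k - l)) *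
            (Nat.factorial (k - l + 1)))

open Nat in
theorem sq_choose_le_choose_two_mul (l m : ℕ) :
    (l + m).choose l ^ 2 ≤ (2 * l + 2 * m).choose (2 * l) := by
  rw [sq, show 2 * l + 2 * m = (l + m) + (l + m) by ring, Nat.add_choose_eq (l + m) (l + m)]
  exact single_le_sum (f := fun p : ℕ × ℕ => (l + m).choose p.1 * (l + m).choose p.2)
    (a := (l, l)) (fun _ _ => Nat.zero_le _)
    (HasAntidiagonal.mem_antidiagonal.mpr (two_mul l).symm)

open Nat in
theorem factorial_two_mul_mul_le (l m : ℕ) :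
    (2 * l)! * (2 * m)! * ((l + m + 1)! * (l + m)!)
      ≤ (2 * l + 2 * m)! * ((l + 1)! * l ! * (m + 1)! * (m + 2)!) := by
  set C := (l + m).choose l
  set D := (2 * l + 2 * m).choose (2 * l)
  have hC : C * l ! * m ! = (l + m)! := by
    simpa using choose_mul_factorial_mul_factorial (le_add_right l m)
  have hD : D * (2 * l)! * (2 * m)! = (2 * l + 2 * m)! := by
    simpa using choose_mul_factorial_mul_factorial (le_add_right (2 * l) (2 * m))
  have hlm : l + m + 1 ≤ (l + 1) * ((m + 1) * ((m + 1) * (m + 2))) := by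
    calc l + m + 1 ≤ (l + 1) * (m + 1) := by nlinarith
      _ ≤ (l + 1) * ((m + 1) * ((m + 1) * (m + 2))) :=
        Nat.mul_le_mul_left _ (Nat.le_mul_of_pos_right _ (by positivity))
  have key : (l + m + 1) * C ^ 2 ≤ (l + 1) * ((m + 1) * ((m + 1) * (m + 2))) * D :=
    Nat.mul_le_mul hlm (sq_choose_le_choose_two_mul l m)
  calc (2 * l)! * (2 * m)! * ((l + m + 1)! * (l + m)!)
      = (l + m + 1) * C ^ 2 * (l ! ^ 2 * m ! ^ 2 * ((2 * l)! * (2 * m)!)) := by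
        rw [factorial_succ, ← hC]; ring
    _ ≤ (l + 1) * ((m + 1) * ((m + 1) * (m + 2))) * D *
          (l ! ^ 2 * m ! ^ 2 * ((2 * l)! * (2 * m)!)) := Nat.mul_le_mul_right _ key
    _ = (2 * l + 2 * m)! * ((l + 1)! * l ! * (m + 1)! * (m + 2)!) := by
        rw [← hD]; simp only [factorial_succ]; ring

open Nat in
theorem factorial_ratio_le_catalan (k l : ℕ) (hlk : l < k) :
    ((2 * l)! * (2 * k - 2 - 2 * l)! : ℚ) / ((l + 1)! * l ! * (k - l)! * (k - l + 1)!)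
      ≤ (2 * k - 2)! / (k ! * (k - 1)!) := by
  obtain ⟨m, rfl⟩ : ∃ m, k = l + m + 1 := ⟨k - l - 1, by omega⟩
  rw [show 2 * (l + m + 1) - 2 - 2 * l = 2 * m by omega, show l + m + 1 - l = m + 1 by omega,
    show 2 * (l + m + 1) - 2 = 2 * l + 2 * m by omega, show l + m + 1 - 1 = l + m by omega,
    div_le_div_iff₀ (by positivity) (by positivity)]
  exact_mod_cast factorial_two_mul_mul_le l m

theorem gammaEH_nonneg (k i : ℕ) (hi : 3 ≤ i) (hik : i ≤ k) : 0 ≤ gammaEH k i := by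
  unfold gammaEH
  rw [sub_nonneg, mul_div_assoc]
  set A : ℚ := (2 * k - 2).factorial / (k.factorial * (k - 1).factorial)
  have hA : 0 ≤ A := by positivity
  have hi' : (3 : ℚ) ≤ i := by exact_mod_cast hi
  have hterm : ∀ l ∈ Icc 1 ((i - 2) / 2),
      2 * ((i : ℚ) - 1 - 2 * l) * (2 * l).factorial * (2 * k - 2 - 2 * l).factorial /
          ((l + 1).factorial * l.factorial * (k - l).factorial * (k - l + 1).factorial)
        ≤ 2 * ((i : ℚ) - 3) * A := by
    intro l hl
    obtain ⟨hl1, hl2⟩ := mem_Icc.mp hl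
    have hl1' : (1 : ℚ) ≤ l := by exact_mod_cast hl1
    have hli : (2 * l + 2 : ℚ) ≤ i := by exact_mod_cast (by omega : 2 * l + 2 ≤ i)
    rw [mul_assoc _ ((2 * l).factorial : ℚ), mul_div_assoc]
    exact mul_le_mul (by linarith) (factorial_ratio_le_catalan k l (by omega))
      (by positivity) (by linarith)
  have hcard : (((i - 2) / 2 : ℕ) : ℚ) * 2 ≤ i - 3 + 1 := by
    have := Nat.div_mul_le_self (i - 2) 2
    rw [← Nat.cast_le (α := ℚ)] at this
    push_cast [Nat.cast_sub (by omega : 2 ≤ i)] at this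
    linarith
  calc _ ≤ (Icc 1 ((i - 2) / 2)).card • (2 * ((i : ℚ) - 3) * A) := sum_le_card_nsmul _ _ _ hterm
    _ = (((i - 2) / 2 : ℕ) : ℚ) * 2 * (i - 3) * A := by
      rw [Nat.card_Icc, Nat.add_sub_cancel, nsmul_eq_mul]; ring
    _ ≤ (i - 3 + 1) * (i - 3) * A := by gcongr
    _ ≤ ((i : ℚ) - 1) * (i - 2) * A := by gcongr <;> linarith

theorem moriwaki_condition_zero (d : ℚ) (hd : 3 ≤ d) :
    (6 * d ^ 2 + d - 6) * (2 * (d - 1)) < (8 * (2 * (d - 1)) + 4) * (d * (d - 1)) := by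
  have hpos : 0 < (d - 1) * (2 * d - 3) * (d - 2) :=
    mul_pos (mul_pos (by linarith) (by linarith)) (by linarith)
  linear_combination 2 * hpos

-- `4i` times this cubic is `(8g+4)(f_i - γ_i/c) - (6d²+d-6) b_i`.
theorem moriwaki_cubic_pos (d i : ℚ) (hd : 3 ≤ d) (hi : 1 ≤ i) (hid : i + 1 ≤ d) :
    0 < 12 * d ^ 3 - (8 * i + 46) * d ^ 2 + (47 / 2 * i + 109 / 2) * d - 15 * i - 21 := by
  obtain ⟨s, hs, rfl⟩ : ∃ s, 0 ≤ s ∧ i = s + 1 := ⟨i - 1, by linarith, by ring⟩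
  obtain ⟨t, ht, rfl⟩ : ∃ t, 0 ≤ t ∧ d = s + t + 2 := ⟨d - s - 2, by linarith, by ring⟩
  have hst := mul_nonneg hs ht
  nlinarith [mul_nonneg hst hs, mul_nonneg hst ht, pow_nonneg hs 3, pow_nonneg ht 3,
    sq_nonneg s, sq_nonneg t]

theorem moriwaki_condition (d i γ : ℚ) (hd : 3 ≤ d) (hi : 1 ≤ i) (hid : i + 1 ≤ d)
    (hγ : 0 ≤ γ) :
    (6 * d ^ 2 + d - 6) * (4 * i * (2 * (d - 1) - i)) <
      (8 * (2 * (d - 1)) + 4) * (-i * (i - 2) * ((2 * d - 3) * (3 * d - 2)) +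
        i * (i - 1) / 2 * (3 * (d - 2) * (4 * d - 3)) + γ) := by
  have hQ := mul_pos (by linarith : (0 : ℚ) < i) (moriwaki_cubic_pos d i hd hi hid)
  have hγ' := mul_nonneg (by linarith : (0 : ℚ) ≤ 16 * d - 12) hγ
  linear_combination 4 * hQ + hγ'

theorem stmt_1 (d : ℕ) (hd : 3 ≤ d) (c : ℚ) (hc : 0 < c)
    (g : ℚ) (hg : g = 2 * ((d : ℚ) - 1)) (k : ℕ) (hk : k = d - 1)
    (f : ℕ → ℚ)
    (hf0 : f 0 = (d : ℚ) * ((d : ℚ) - 1))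
    (hf1 : f 1 = (2 * (d : ℚ) - 3) * (3 * (d : ℚ) - 2))
    (hf2 : f 2 = 3 * ((d : ℚ) - 2) * (4 * (d : ℚ) - 3))
    (hfi : ∀ i : ℕ, 3 ≤ i → i ≤ d - 1 →
      f i = -(i : ℚ) * ((i : ℚ) - 2) * f 1 + ((i : ℚ) * ((i : ℚ) - 1) / 2) * f 2
              + gammaEH k i / c)
    (b : ℕ → ℚ) (hb0 : b 0 = g)
    (hbi : ∀ i : ℕ, 1 ≤ i → i ≤ d - 1 → b i = 4 * (i : ℚ) * (g - (i : ℚ))) :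
    ∀ i : ℕ, i ≤ d - 1 → (6 * (d : ℚ) ^ 2 + (d : ℚ) - 6) * b i < (8 * g + 4) * f i := by
  intro i hi
  subst hg hk
  have hd' : (3 : ℚ) ≤ d := by exact_mod_cast hd
  obtain rfl | hi1 := Nat.eq_zero_or_pos i
  · rw [hb0, hf0]
    exact moriwaki_condition_zero d hd'
  -- `f 1` and `f 2` also follow the formula for `f i`, with vanishing `γ`-term.
  obtain ⟨γ, hγ, hfγ⟩ : ∃ γ : ℚ, 0 ≤ γ ∧
      f i = -(i : ℚ) * (i - 2) * f 1 + (i * (i - 1) / 2) * f 2 + γ := by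
    rcases (by omega : i = 1 ∨ i = 2 ∨ 3 ≤ i) with rfl | rfl | hi3
    · exact ⟨0, le_rfl, by push_cast; ring⟩
    · exact ⟨0, le_rfl, by push_cast; ring⟩
    · exact ⟨_, div_nonneg (gammaEH_nonneg _ i hi3 (by omega)) hc.le, hfi i hi3 hi⟩
  rw [hbi i hi1 hi, hfγ, hf1, hf2]
  exact moriwaki_condition d i γ hd' (by exact_mod_cast hi1)
    (by exact_mod_cast (by omega : i + 1 ≤ d)) hγ
end

section
/- Let k ≥ 3 be an integer and let i be an integer with 3 ≤ i ≤ k. Then γ_i ≥ 0, where γ_i = (i−1)(i−2)·(2k−2)!/(k!·(k−1)!) − Σ_{l=1}^{⌊(i−2)/2⌋} 2(i−1−2l)·(2l)!·(2k−2−2l)!/((l+1)!·l!·(k−l)!·(k−l+1)!) is a rational number. -/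
/-!
With `c_n` the Catalan numbers, `(2k-2)!/(k!(k-1)!) = c_{k-1}` and the `l`-th summand of `γ_i` is
`2(i-1-2l) · c_l c_{k-1-l} / ((k-l)(k-l+1))`. Segner's recursion gives `c_l c_m ≤ c_{l+m+1}`, and
`c_{n+1} ≤ 4 c_n`, so each summand is at most `2(i-1) c_{k-1}`. As there are
`⌊(i-2)/2⌋` of them, their total is at most `(i-1)(i-2) c_{k-1}`.
-/

open Finset

open Nat

theorem catalan_mul_factorial_mul_factorial (n : ℕ) :
    catalan n * (n + 1)! * n ! = (2 * n)! := by
  rw [factorial_succ, ← Nat.choose_mul_factorial_mul_factorial (by omega : n ≤ 2 * n),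
    show 2 * n - n = n by omega, ← centralBinom_eq_two_mul_choose,
    ← succ_mul_catalan_eq_centralBinom]
  ring

theorem catalan_eq_factorial_div (n : ℕ) :
    (catalan n : ℚ) = (2 * n)! / ((n + 1)! * n !) := by
  rw [eq_div_iff (by positivity), ← catalan_mul_factorial_mul_factorial]
  push_cast; ring

theorem catalan_mul_catalan_le (l m : ℕ) : catalan l * catalan m ≤ catalan (l + m + 1) := by
  rw [catalan_succ']
  exact single_le_sum (f := fun ij : ℕ × ℕ => catalan ij.1 * catalan ij.2)
    (a := (l, m)) (fun _ _ => Nat.zero_le _) (mem_antidiagonal.mpr rfl)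

theorem catalan_succ_le (n : ℕ) : catalan (n + 1) ≤ 4 * catalan n := by
  have h := succ_mul_centralBinom_succ n
  rw [← succ_mul_catalan_eq_centralBinom, ← succ_mul_catalan_eq_centralBinom] at h
  have h4 : (n + 2) * catalan (n + 1) ≤ (n + 2) * (4 * catalan n) := by nlinarith
  exact Nat.le_of_mul_le_mul_left h4 (by omega)

theorem catalan_mul_catalan_div_le (l m : ℕ) :
    (catalan l * catalan (m + 1) : ℚ) / ((m + 2) * (m + 3)) ≤ catalan (l + m + 1) := by
  have h : catalan l * catalan (m + 1) ≤ 4 * catalan (l + m + 1) :=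
    (catalan_mul_catalan_le l (m + 1)).trans
      (by simpa [add_assoc] using catalan_succ_le (l + m + 1))
  rw [div_le_iff₀ (by positivity)]
  have h' : (catalan l * catalan (m + 1) : ℚ) ≤ 4 * catalan (l + m + 1) := by exact_mod_cast h
  have h4 : (4 : ℚ) ≤ (m + 2) * (m + 3) := by nlinarith [m.cast_nonneg (α := ℚ)]
  nlinarith [(catalan (l + m + 1)).cast_nonneg (α := ℚ)]

/- With `k = l + m + 2` the left side is `c_l c_{m+1} / ((m + 2)(m + 3))` and the right side
is `c_{l+m+1}`. -/
theorem gammaEH_summand_le (k l : ℕ) (h : l + 2 ≤ k) :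
    ((2 * l)! : ℚ) * (2 * k - 2 - 2 * l)! / ((l + 1)! * l ! * (k - l)! * (k - l + 1)!) ≤
      (2 * k - 2)! / (k ! * (k - 1)!) := by
  obtain ⟨m, rfl⟩ : ∃ m, k = l + m + 1 + 1 := ⟨k - l - 2, by omega⟩
  rw [show 2 * (l + m + 1 + 1) - 2 - 2 * l = 2 * (m + 1) by omega,
    show l + m + 1 + 1 - l = m + 1 + 1 by omega,
    show 2 * (l + m + 1 + 1) - 2 = 2 * (l + m + 1) by omega, Nat.add_sub_cancel,
    ← catalan_eq_factorial_div]
  convert catalan_mul_catalan_div_le l m using 1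
  rw [catalan_eq_factorial_div, catalan_eq_factorial_div, factorial_succ (m + 1 + 1),
    factorial_succ (m + 1)]
  push_cast
  field_simp
  ring

theorem sub_two_div_two_mul_le (i : ℕ) :
    (((i - 2) / 2 : ℕ) : ℚ) * (2 * ((i : ℚ) - 1)) ≤ ((i : ℚ) - 1) * ((i : ℚ) - 2) := by
  rcases Nat.lt_or_ge i 2 with hi | hi
  · interval_cases i <;> norm_num
  · have h2 : (2 * ((i - 2) / 2 : ℕ) : ℚ) ≤ (i : ℚ) - 2 := by
      rw [← Nat.cast_ofNat, ← Nat.cast_mul, ← Nat.cast_sub hi]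
      exact_mod_cast Nat.mul_div_le (i - 2) 2
    have h1 : (1 : ℚ) ≤ i := by exact_mod_cast (by omega : 1 ≤ i)
    nlinarith

theorem stmt_5_general (k : ℕ) (i : ℕ) (hi : i ≤ k) :
    0 ≤ gammaEH k i := by
  have hC : (0 : ℚ) ≤ (2 * k - 2)! / (k ! * (k - 1)!) := by positivity
  rw [gammaEH, sub_nonneg, mul_div_assoc]
  calc _ ≤ ∑ _l ∈ Icc 1 ((i - 2) / 2),
          2 * ((i : ℚ) - 1) * ((2 * k - 2)! / (k ! * (k - 1)!)) := by
        refine sum_le_sum fun l hl => ?_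
        have hl_bounds := mem_Icc.mp hl
        have h2l : (2 * l : ℚ) ≤ i - 2 := by
          rw [← Nat.cast_ofNat, ← Nat.cast_mul, ← Nat.cast_sub (by omega)]
          exact_mod_cast (by omega : 2 * l ≤ i - 2)
        rw [mul_assoc _ ((2 * l)! : ℚ), mul_div_assoc]
        exact mul_le_mul (by linarith) (gammaEH_summand_le k l (by omega)) (by positivity)
          (by linarith)
    _ = (((i - 2) / 2 : ℕ) : ℚ) * (2 * ((i : ℚ) - 1)) *
          ((2 * k - 2)! / (k ! * (k - 1)!)) := by
        rw [sum_const, Nat.card_Icc, nsmul_eq_mul, Nat.add_sub_cancel]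
        ring
    _ ≤ _ := mul_le_mul_of_nonneg_right (sub_two_div_two_mul_le i) hC

theorem stmt_5 (k : ℕ) (hk : 3 ≤ k) (i : ℕ) (h3 : 3 ≤ i) (hi : i ≤ k) :
    0 ≤ gammaEH k i :=
  stmt_5_general k i hi
end

section
/- Let k ≥ 6 be an integer and let h be an integer with 2 ≤ h ≤ ⌊(k−2)/2⌋. Then v_h ≤ max(v_2, v_{⌊(k−2)/2⌋}), where v_j = (2j)!·(2k−2−2j)!/((j+1)!·j!·(k−j)!·(k−j+1)!) as rational numbers. -/
/-!
Writing `k = h + m + 2`, the ratio `v_{h+1} / v_h` equals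
`(2h+1)(m+2)(m+3) / ((m+1)(2m+1)(h+2))`, and numerator minus denominator is `N_{k,h+1}`;
so `v_{h+1} - v_h` has the sign of `N_{k,h+1}`. As a function of `h`, `N_{k,h}` increases
as long as `20h + 4 ≤ 13k`, in particular on `2 ≤ h ≤ ⌊(k-2)/2⌋`. Hence on that range `v` first
decreases and then increases, and every value is bounded by one of the two endpoint values.
-/

/-- `v_j = (2j)!·(2k−2−2j)!/((j+1)!·j!·(k−j)!·(k−j+1)!)`. -/
def vEH (k j : ℕ) : ℚ :=
  (Nat.factorial (2 * j)) * (Nat.factorial (2 * k - 2 - 2 * j)) /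
    ((Nat.factorial (j + 1)) * (Nat.factorial j) * (Nat.factorial (k - j)) *
      (Nat.factorial (k - j + 1)))

open Set Order

theorem le_max_endpoints_of_step_sign_monotoneOn {α β : Type*} [LinearOrder α] [LinearOrder β]
    {f : ℕ → α} {g : ℕ → β} {c : β} {a b i : ℕ} (hg : MonotoneOn g (Icc a b))
    (hdown : ∀ n, a ≤ n → n < b → g (n + 1) ≤ c → f (n + 1) ≤ f n)
    (hup : ∀ n, a ≤ n → n < b → c ≤ g (n + 1) → f n ≤ f (n + 1))
    (hi : i ∈ Icc a b) : f i ≤ max (f a) (f b) := by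
  obtain ⟨hai, hib⟩ := hi
  rcases le_total (g i) c with hgi | hgi
  · have hf : AntitoneOn f (Icc a i) := antitoneOn_of_succ_le ordConnected_Icc
      fun n _ hn hn' => by
        rw [succ_eq_add_one] at hn' ⊢
        exact hdown n hn.1 (by grind) <|
          (hg ⟨by grind, by grind⟩ ⟨hai, hib⟩ hn'.2).trans hgi
    exact le_max_of_le_left (hf ⟨le_rfl, hai⟩ ⟨hai, le_rfl⟩ hai)
  · have hf : MonotoneOn f (Icc i b) := monotoneOn_of_le_succ ordConnected_Icc
      fun n _ hn hn' => by
        rw [succ_eq_add_one] at hn' ⊢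
        exact hup n (hai.trans hn.1) (by grind) <|
          hgi.trans (hg ⟨hai, hib⟩ ⟨by grind, hn'.2⟩ (by grind))
    exact le_max_of_le_right (hf ⟨le_rfl, hib⟩ ⟨hib, le_rfl⟩ hib)

/-- The quadratic `N_{k,h}`. -/
def quadN (k h : ℤ) : ℤ := -3 * k ^ 2 + 13 * k * h - 2 * k - 10 * h ^ 2 + 6 * h - 2

lemma quadN_le_succ {k h : ℤ} (hkh : 20 * h + 4 ≤ 13 * k) : quadN k h ≤ quadN k (h + 1) := by
  unfold quadN
  linear_combination hkh

lemma vEH_pos (k j : ℕ) : 0 < vEH k j := by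
  unfold vEH
  positivity

lemma vEH_succ_sub (h m : ℕ) :
    vEH (h + m + 2) (h + 1) - vEH (h + m + 2) h =
      vEH (h + m + 2) h / ((m + 1) * (2 * m + 1) * (h + 2)) *
        quadN (h + m + 2 : ℕ) (h + 1 : ℕ) := by
  unfold vEH quadN
  rw [show 2 * (h + m + 2) - 2 - 2 * (h + 1) = 2 * m by omega,
    show 2 * (h + m + 2) - 2 - 2 * h = 2 * m + 1 + 1 by omega,
    show h + m + 2 - (h + 1) = m + 1 by omega, show h + m + 2 - h = m + 1 + 1 by omega,
    show 2 * (h + 1) = 2 * h + 1 + 1 by omega]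
  simp only [Nat.factorial_succ]
  push_cast
  field_simp
  ring

lemma vEH_succ_le_iff {k h : ℕ} (hk : h + 2 ≤ k) :
    vEH k (h + 1) ≤ vEH k h ↔ quadN k (h + 1 : ℕ) ≤ 0 := by
  obtain ⟨m, rfl⟩ : ∃ m, k = h + m + 2 := ⟨k - h - 2, by omega⟩
  have hc : 0 < vEH (h + m + 2) h / ((m + 1) * (2 * m + 1) * (h + 2)) :=
    div_pos (vEH_pos _ _) (by positivity)
  rw [← sub_nonpos, vEH_succ_sub, ← mul_zero (_ / _), mul_le_mul_iff_of_pos_left hc,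
    Int.cast_nonpos]

lemma vEH_le_succ_iff {k h : ℕ} (hk : h + 2 ≤ k) :
    vEH k h ≤ vEH k (h + 1) ↔ 0 ≤ quadN k (h + 1 : ℕ) := by
  obtain ⟨m, rfl⟩ : ∃ m, k = h + m + 2 := ⟨k - h - 2, by omega⟩
  have hc : 0 < vEH (h + m + 2) h / ((m + 1) * (2 * m + 1) * (h + 2)) :=
    div_pos (vEH_pos _ _) (by positivity)
  rw [← sub_nonneg, vEH_succ_sub, mul_nonneg_iff_of_pos_left hc, Int.cast_nonneg_iff]

theorem stmt_9_general (k : ℕ) (h : ℕ) (h2 : 2 ≤ h) (hh : h ≤ (k - 2) / 2) :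
    vEH k h ≤ max (vEH k 2) (vEH k ((k - 2) / 2)) := by
  refine le_max_endpoints_of_step_sign_monotoneOn (g := fun n : ℕ => quadN k n) (c := 0)
    ?_ (fun n _ hn hN => (vEH_succ_le_iff (by omega)).2 hN)
    (fun n _ hn hN => (vEH_le_succ_iff (by omega)).2 hN) ⟨h2, hh⟩
  refine monotoneOn_of_le_succ ordConnected_Icc fun n _ _ ⟨_, hn⟩ => ?_
  rw [succ_eq_add_one] at hn ⊢
  exact_mod_cast quadN_le_succ (by omega)

theorem stmt_9 (k : ℕ) (hk : 6 ≤ k) (h : ℕ) (h2 : 2 ≤ h) (hh : h ≤ (k - 2) / 2) :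
    vEH k h ≤ max (vEH k 2) (vEH k ((k - 2) / 2)) :=
  stmt_9_general k h h2 hh
end

section
/- For every integer h ≥ 2 one has (4h+2)!/((2h+2)!·(2h+1)!) ≥ (2h)!·(2h+2)!/((h+1)!·h!·(h+2)!·(h+3)!), as rational numbers; equivalently a_h := (4h+2)!·h!·(h+1)!·(h+2)!·(h+3)!/(((2h+2)!)²·(2h+1)!·(2h)!) ≥ 1. -/
/-!
Clearing denominators, both inequalities say `L h ≤ R h` with
`L h = ((2h+2)!)² (2h+1)! (2h)!` and `R h = (4h+2)! h! (h+1)! (h+2)! (h+3)!`.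
This follows by induction: `L 0 = 4 ≤ 24 = R 0`, and passing from `h` to `h + 1`
multiplies `L` by a polynomial factor of degree 8 which is dominated by the factor multiplying `R`.
-/

open Nat

theorem factorial_add_four (n : ℕ) : (n + 4)! = (n + 4) * (n + 3) * (n + 2) * (n + 1) * n ! := by
  simp only [factorial_succ]; ring

theorem factorial_add_two (n : ℕ) : (n + 2)! = (n + 2) * (n + 1) * n ! := by
  simp only [factorial_succ]; ring

theorem lhs_factorials_succ (h : ℕ) :
    ((2 * (h + 1) + 2)!) ^ 2 * (2 * (h + 1) + 1)! * (2 * (h + 1))! =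
      ((2 * h + 4) * (2 * h + 3)) ^ 2 * ((2 * h + 3) * (2 * h + 2)) * ((2 * h + 2) * (2 * h + 1)) *
        (((2 * h + 2)!) ^ 2 * (2 * h + 1)! * (2 * h)!) := by
  rw [show 2 * (h + 1) + 2 = 2 * h + 2 + 2 by ring, show 2 * (h + 1) + 1 = 2 * h + 1 + 2 by ring,
    show 2 * (h + 1) = 2 * h + 2 by ring, factorial_add_two (2 * h + 2),
    factorial_add_two (2 * h + 1), factorial_add_two (2 * h)]
  ring

theorem rhs_factorials_succ (h : ℕ) :
    (4 * (h + 1) + 2)! * ((h + 1)! * (h + 1 + 1)! * (h + 1 + 2)! * (h + 1 + 3)!) =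
      (4 * h + 6) * (4 * h + 5) * (4 * h + 4) * (4 * h + 3) * ((h + 1) * (h + 2) * (h + 3) * (h + 4)) *
        ((4 * h + 2)! * (h ! * (h + 1)! * (h + 2)! * (h + 3)!)) := by
  rw [show 4 * (h + 1) + 2 = 4 * h + 2 + 4 by ring, factorial_add_four]
  simp only [factorial_succ]
  ring

/-- After cancelling `8 (h+1)² (h+2) (2h+3)`, the step reduces to the product of
`(2h+3)² ≤ (4h+5)(h+3)` and `2(h+2)(2h+1) ≤ (4h+3)(h+4)`. -/
theorem lhs_growth_le_rhs_growth (h : ℕ) :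
    ((2 * h + 4) * (2 * h + 3)) ^ 2 * ((2 * h + 3) * (2 * h + 2)) * ((2 * h + 2) * (2 * h + 1)) ≤
      (4 * h + 6) * (4 * h + 5) * (4 * h + 4) * (4 * h + 3) * ((h + 1) * (h + 2) * (h + 3) * (h + 4)) :=
  calc _ = 8 * (h + 1) ^ 2 * (h + 2) * (2 * h + 3) * ((2 * h + 3) ^ 2 * (2 * (h + 2) * (2 * h + 1))) := by
        ring
    _ ≤ 8 * (h + 1) ^ 2 * (h + 2) * (2 * h + 3) * (((4 * h + 5) * (h + 3)) * ((4 * h + 3) * (h + 4))) := by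
        gcongr _ * (?_ * ?_) <;> nlinarith
    _ = _ := by ring

theorem factorial_two_mul_add_two_sq_mul_le (h : ℕ) :
    ((2 * h + 2)!) ^ 2 * (2 * h + 1)! * (2 * h)! ≤ (4 * h + 2)! * (h ! * (h + 1)! * (h + 2)! * (h + 3)!) := by
  induction h with
  | zero => decide
  | succ h ih =>
    rw [lhs_factorials_succ, rhs_factorials_succ]
    exact Nat.mul_le_mul (lhs_growth_le_rhs_growth h) ih

theorem stmt_12_general (h : ℕ) :
    ((Nat.factorial (4 * h + 2)) : ℚ) / ((Nat.factorial (2 * h + 2)) * (Nat.factorial (2 * h + 1)))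
        ≥ (Nat.factorial (2 * h)) * (Nat.factorial (2 * h + 2)) /
            ((Nat.factorial (h + 1)) * (Nat.factorial h) * (Nat.factorial (h + 2)) *
              (Nat.factorial (h + 3)))
      ∧ ((Nat.factorial (4 * h + 2)) : ℚ) * (Nat.factorial h) * (Nat.factorial (h + 1)) *
            (Nat.factorial (h + 2)) * (Nat.factorial (h + 3)) /
          (((Nat.factorial (2 * h + 2)) : ℚ) ^ 2 * (Nat.factorial (2 * h + 1)) *
            (Nat.factorial (2 * h))) ≥ 1 := by
  have key : (((2 * h + 2)! : ℚ)) ^ 2 * (2 * h + 1)! * (2 * h)! ≤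
      (4 * h + 2)! * (h ! * (h + 1)! * (h + 2)! * (h + 3)!) := by
    exact_mod_cast factorial_two_mul_add_two_sq_mul_le h
  have pos (n : ℕ) : (0 : ℚ) < n ! := by exact_mod_cast n.factorial_pos
  constructor
  · rw [ge_iff_le, div_le_div_iff₀ (by positivity) (by positivity)]
    linarith
  · rw [ge_iff_le, le_div_iff₀ (by positivity)]
    linarith

theorem stmt_12 (h : ℕ) (h2 : 2 ≤ h) :
    ((Nat.factorial (4 * h + 2)) : ℚ) / ((Nat.factorial (2 * h + 2)) * (Nat.factorial (2 * h + 1)))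
        ≥ (Nat.factorial (2 * h)) * (Nat.factorial (2 * h + 2)) /
            ((Nat.factorial (h + 1)) * (Nat.factorial h) * (Nat.factorial (h + 2)) *
              (Nat.factorial (h + 3)))
      ∧ ((Nat.factorial (4 * h + 2)) : ℚ) * (Nat.factorial h) * (Nat.factorial (h + 1)) *
            (Nat.factorial (h + 2)) * (Nat.factorial (h + 3)) /
          (((Nat.factorial (2 * h + 2)) : ℚ) ^ 2 * (Nat.factorial (2 * h + 1)) *
            (Nat.factorial (2 * h))) ≥ 1 :=
  stmt_12_general h
end
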